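/- Let S = {f_1,…,f_k} be a jointly regular family of affine morphisms with r = max_l r(f_l), let Φ be the monoid generated by S under composition, and set δ_S = (1/(1+1/r))·∑_{l=1}^k 1/deg(f_l). If δ_S < 1, then the set Pre(Φ) = ⋂_{φ∈Φ} Pre(φ) of points with finite Φ-orbit is a set of bounded height: explicitly, h(P) ≤ C/(1−δ_S) for all P ∈ Pre(Φ), where C is the constant from the height inequality for S. -/

import Mathlib

open scoped Classical NNReal

noncomputable section

namespace PaperHeights

open NumberField IsDedekindDomain

/-- The `v`-adic absolute value of `x ∈ K`, normalized so that
`‖x‖_v = N(v)^{-ord_v(x)}`. -/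
noncomputable def vAbs {K : Type*} [Field K] [NumberField K]
    (v : HeightOneSpectrum (𝓞 K)) (x : K) : ℝ :=
  (WithZeroMulInt.toNNReal
    (by
      have : v.asIdeal ≠ ⊥ := v.ne_bot
      simpa [ne_eq, Nat.cast_eq_zero, Ideal.absNorm_eq_zero_iff] using this
      : ((Ideal.absNorm v.asIdeal : ℝ≥0)) ≠ 0)
    (v.valuation K x) : ℝ≥0)

/-- The multiplicative Weil height of a tuple of coordinates in a number field `K`,
relative to `K`. -/
noncomputable def mulHeight {K : Type*} [Field K] [NumberField K] {m : ℕ}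
    (x : Fin (m + 1) → K) : ℝ :=
  (∏ᶠ v : HeightOneSpectrum (𝓞 K),
      Finset.univ.sup' Finset.univ_nonempty fun i => vAbs v (x i)) *
    ∏ v : InfinitePlace K,
      (Finset.univ.sup' Finset.univ_nonempty fun i => v (x i)) ^ v.mult

/-- The absolute logarithmic Weil height of a tuple of coordinates in `K`. -/
noncomputable def logHeight {K : Type*} [Field K] [NumberField K] {m : ℕ}
    (x : Fin (m + 1) → K) : ℝ :=
  Real.log (mulHeight x) / (Module.finrank ℚ K)

/-- The field of algebraic numbers. -/
abbrev Qbar : Type := AlgebraicClosure ℚ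

/-- The absolute logarithmic Weil height of a point of `ℙⁿ(ℚ̄)` given by homogeneous
coordinates `x : Fin (n+1) → ℚ̄` (it is scaling invariant, so well defined on `ℙⁿ`). -/
noncomputable def projHeight {n : ℕ} (x : Fin (n + 1) → Qbar) : ℝ :=
  letI K : IntermediateField ℚ Qbar := IntermediateField.adjoin ℚ (Set.range x)
  haveI : FiniteDimensional ℚ K :=
    IntermediateField.finiteDimensional_adjoin fun y _ => by
      have h := (AlgebraicClosure.isAlgebraic ℚ).isAlgebraic y
      convert h.isIntegral
      exact Subsingleton.elim _ _
  haveI : NumberField K := ⟨⟩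
  logHeight fun i =>
    (⟨x i, IntermediateField.subset_adjoin ℚ (Set.range x) ⟨i, rfl⟩⟩ : K)

/-- The logarithmic Weil height of a point of affine `n`-space `𝔸ⁿ(ℚ̄)`, computed via the
standard embedding `𝔸ⁿ ⊆ ℙⁿ`, `P ↦ [P : 1]`. -/
noncomputable def affHeight {n : ℕ} (P : Fin n → Qbar) : ℝ :=
  projHeight (Fin.snoc P 1)

end PaperHeights

namespace PaperHeights

open MvPolynomial

/-- A (dominant or not) rational self-map of `ℙⁿ` over `ℚ̄`, given by `n+1` homogeneous
polynomials of common degree `d` with no common factor and not all zero. -/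
structure RatMap (n : ℕ) where
  d : ℕ
  hd : 0 < d
  F : Fin (n + 1) → MvPolynomial (Fin (n + 1)) Qbar
  homog : ∀ i, (F i).IsHomogeneous d
  nontriv : ∃ i, F i ≠ 0
  coprime : ∀ q : MvPolynomial (Fin (n + 1)) Qbar, (∀ i, q ∣ F i) → IsUnit q

variable {n : ℕ}

/-- Evaluation of the defining polynomials of a rational map on a coordinate vector. -/
noncomputable def RatMap.eval (f : RatMap n) (x : Fin (n + 1) → Qbar) :
    Fin (n + 1) → Qbar :=
  fun i => MvPolynomial.eval x (f.F i)

/-- The indeterminacy locus `Z(f)`, as a set of nonzero coordinate vectors. -/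
def RatMap.Indet (f : RatMap n) : Set (Fin (n + 1) → Qbar) :=
  {x | x ≠ 0 ∧ f.eval x = 0}

/-- `f` is a morphism if its indeterminacy locus is empty. -/
def RatMap.IsMorphism (f : RatMap n) : Prop :=
  ∀ x : Fin (n + 1) → Qbar, x ≠ 0 → f.eval x ≠ 0

/-- `f` is defined over the number field `K ⊆ ℚ̄` if all coefficients of its defining
polynomials lie in `K`. -/
def RatMap.DefinedOver (f : RatMap n) (K : IntermediateField ℚ Qbar) : Prop :=
  ∀ (i : Fin (n + 1)) (m : (Fin (n + 1)) →₀ ℕ), (f.F i).coeff m ∈ K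

end PaperHeights

namespace PaperHeights

open scoped ENNReal

variable {n : ℕ}

/-- A resolution of indeterminacy `(V, π)` of a rational map `f : ℙⁿ ⇢ ℙⁿ`, together with
the coefficients of `π*H` and of `φ*H` (`φ = f ∘ π` the resolved morphism) in the basis
`{H_V, E_1, …, E_s}` of `Pic(V)` given by the proper transform of the hyperplane `H` and
the exceptional components.  Index `0` corresponds to `H_V`. -/
structure Resolution (f : RatMap n) where
  V : Type
  π : V → (Fin (n + 1) → Qbar)
  φ : V → (Fin (n + 1) → Qbar)
  hπ : ∀ v, π v ≠ 0
  hφ : ∀ v, φ v ≠ 0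
  hsurj : ∀ x : Fin (n + 1) → Qbar, x ≠ 0 → ∃ v, ∃ c : Qbar, c ≠ 0 ∧ π v = c • x
  hcompat : ∀ v, π v ∉ f.Indet → ∃ c : Qbar, c ≠ 0 ∧ φ v = c • f.eval (π v)
  s : ℕ
  a : Fin (s + 1) → ℕ
  b : Fin (s + 1) → ℕ
  ha0 : a 0 = 1
  hb0 : b 0 = f.d

/-- The `D`-ratio of the resolved morphism of a resolution of indeterminacy:
`r(φ) = deg f · max_i (aᵢ / bᵢ)`, with value `∞` if some `bᵢ = 0` while `aᵢ ≠ 0`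
(in `ℝ≥0∞` one has `aᵢ/0 = ∞` for `aᵢ ≠ 0`, and `0/0 = 0`). -/
noncomputable def Resolution.Dratio {f : RatMap n} (R : Resolution f) : ℝ≥0∞ :=
  (f.d : ℝ≥0∞) * ⨆ i : Fin (R.s + 1), (R.a i : ℝ≥0∞) / (R.b i : ℝ≥0∞)

/-- The `D`-ratio of a rational map, defined via resolutions of indeterminacy. -/
noncomputable def RatMap.Dratio (f : RatMap n) : ℝ≥0∞ :=
  ⨅ R : Resolution f, R.Dratio

end PaperHeights

namespace PaperHeights

/-- `f` is the meromorphic extension to `ℙⁿ` of an affine morphism `𝔸ⁿ → 𝔸ⁿ`. -/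
def RatMap.IsAffineMorphismExtension {n : ℕ} (f : RatMap n) : Prop :=
  f.F (Fin.last n) = MvPolynomial.X (Fin.last n) ^ f.d

/-- The family `f₁, …, f_k` is jointly regular: `⋂ Z(f_l) = ∅`. -/
def JointlyRegular {n k : ℕ} (f : Fin k → RatMap n) : Prop :=
  (⋂ l, (f l).Indet) = ∅

/-- The affine self-map of `𝔸ⁿ(ℚ̄)` induced by a rational map which extends an affine
morphism (evaluation on the chart `{x_n = 1}`). -/
noncomputable def RatMap.affineMap {n : ℕ} (f : RatMap n) :
    (Fin n → Qbar) → (Fin n → Qbar) :=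
  fun P i => MvPolynomial.eval (Fin.snoc P 1) (f.F i.castSucc)

/-- Application of a word in the generating maps: `f_I = f_{i₁} ∘ ⋯ ∘ f_{i_m}`. -/
noncomputable def wordApply {n k : ℕ} (f : Fin k → RatMap n) :
    List (Fin k) → (Fin n → Qbar) → (Fin n → Qbar)
  | [], P => P
  | l :: w, P => (f l).affineMap (wordApply f w P)

/-- The orbit `Φ(P)` of a point under the monoid `Φ` generated by the family. -/
noncomputable def monoidOrbit {n k : ℕ} (f : Fin k → RatMap n) (P : Fin n → Qbar) :
    Set (Fin n → Qbar) :=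
  {Q | ∃ w : List (Fin k), Q = wordApply f w P}

end PaperHeights


/-!
Let `Q₀` be a point of maximal height in the finite orbit `Φ(P)`. Every `f_l(Q₀)` lies in the
orbit again, so the left side of the height inequality at `Q₀` is at most
`(∑ 1/deg f_l) · h(Q₀) = δ (1 + 1/r) h(Q₀)`. Hence `(1 - δ)(1 + 1/r) h(Q₀) < C`, and since heights
are nonnegative, `h(P) ≤ h(Q₀) ≤ C / (1 - δ)`.
-/

namespace PaperHeights

open NumberField IsDedekindDomain

lemma one_le_mulHeight_of_eq_one {K : Type*} [Field K] [NumberField K] {m : ℕ}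
    {x : Fin (m + 1) → K} (i₀ : Fin (m + 1)) (hx : x i₀ = 1) : 1 ≤ mulHeight x := by
  have hfin : 1 ≤ ∏ᶠ v : HeightOneSpectrum (𝓞 K),
      Finset.univ.sup' Finset.univ_nonempty fun i => vAbs v (x i) := by
    refine finprod_induction _ le_rfl (fun a b ha hb => one_le_mul_of_one_le_of_one_le ha hb)
      fun v => ?_
    calc (1 : ℝ) = vAbs v (x i₀) := by simp [vAbs, hx]
      _ ≤ _ := Finset.le_sup' (fun i => vAbs v (x i)) (Finset.mem_univ i₀)
  have hinf : 1 ≤ ∏ v : InfinitePlace K,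
      (Finset.univ.sup' Finset.univ_nonempty fun i => v (x i)) ^ v.mult := by
    refine Finset.one_le_prod fun v _ => one_le_pow₀ ?_
    calc (1 : ℝ) = v (x i₀) := by simp [hx]
      _ ≤ _ := Finset.le_sup' (fun i => v (x i)) (Finset.mem_univ i₀)
  exact one_le_mul_of_one_le_of_one_le hfin hinf

lemma logHeight_nonneg_of_eq_one {K : Type*} [Field K] [NumberField K] {m : ℕ}
    {x : Fin (m + 1) → K} (i₀ : Fin (m + 1)) (hx : x i₀ = 1) : 0 ≤ logHeight x :=
  div_nonneg (Real.log_nonneg (one_le_mulHeight_of_eq_one i₀ hx)) (Nat.cast_nonneg _)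

instance numberField_adjoin_range {m : ℕ} (x : Fin m → Qbar) :
    NumberField (IntermediateField.adjoin ℚ (Set.range x)) where
  to_finiteDimensional :=
    IntermediateField.finiteDimensional_adjoin fun y _ => by
      -- `Qbar` carries two `Algebra ℚ` instances; they agree as `Algebra ℚ _` is a subsingleton.
      convert ((AlgebraicClosure.isAlgebraic ℚ).isAlgebraic y).isIntegral
      exact Subsingleton.elim _ _

lemma projHeight_nonneg_of_eq_one {n : ℕ} {x : Fin (n + 1) → Qbar} (i₀ : Fin (n + 1))
    (hx : x i₀ = 1) : 0 ≤ projHeight x :=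
  logHeight_nonneg_of_eq_one i₀ (Subtype.ext hx)

lemma affHeight_nonneg {n : ℕ} (P : Fin n → Qbar) : 0 ≤ affHeight P :=
  projHeight_nonneg_of_eq_one (Fin.last n) (Fin.snoc_last _ _)

lemma affineMap_mem_monoidOrbit {n k : ℕ} {f : Fin k → RatMap n} {P Q : Fin n → Qbar}
    (hQ : Q ∈ monoidOrbit f P) (l : Fin k) : (f l).affineMap Q ∈ monoidOrbit f P := by
  obtain ⟨w, rfl⟩ := hQ
  exact ⟨l :: w, rfl⟩

section HeightInequality

variable {α ι : Type*} [Fintype ι] {g : ι → α → α} {h : α → ℝ} {c : ι → ℝ} {t δ C : ℝ}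

lemma le_div_of_height_inequality_of_forall_le (hc : ∀ l, 0 ≤ c l) (ht : 0 ≤ t)
    (hδ : δ = 1 / (1 + t) * ∑ l, c l) (hδ1 : δ < 1) {Q : α} (hQ : 0 ≤ h Q)
    (hmax : ∀ l, h (g l Q) ≤ h Q) (hC : (1 + t) * h Q - C < ∑ l, c l * h (g l Q)) :
    h Q ≤ C / (1 - δ) := by
  have hsum : ∑ l, c l = δ * (1 + t) := by
    rw [hδ]
    field_simp
  have himages : ∑ l, c l * h (g l Q) ≤ δ * (1 + t) * h Q := by
    rw [← hsum, Finset.sum_mul]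
    exact Finset.sum_le_sum fun l _ => mul_le_mul_of_nonneg_left (hmax l) (hc l)
  rw [le_div_iff₀ (by linarith)]
  nlinarith [mul_nonneg (mul_nonneg ht hQ) (sub_nonneg.mpr hδ1.le)]

lemma le_div_of_height_inequality_of_finite {S : Set α} (hS : S.Finite)
    (hgS : ∀ l, ∀ Q ∈ S, g l Q ∈ S) (h0 : ∀ Q ∈ S, 0 ≤ h Q) (hc : ∀ l, 0 ≤ c l) (ht : 0 ≤ t)
    (hδ : δ = 1 / (1 + t) * ∑ l, c l) (hδ1 : δ < 1)
    (hC : ∀ Q, (1 + t) * h Q - C < ∑ l, c l * h (g l Q)) {P : α} (hP : P ∈ S) :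
    h P ≤ C / (1 - δ) := by
  obtain ⟨Q₀, hQ₀, hmax⟩ := Set.exists_max_image S h hS ⟨P, hP⟩
  calc h P ≤ h Q₀ := hmax P hP
    _ ≤ C / (1 - δ) := le_div_of_height_inequality_of_forall_le hc ht hδ hδ1 (h0 Q₀ hQ₀)
        (fun l => hmax _ (hgS l Q₀ hQ₀)) (hC Q₀)

end HeightInequality

end PaperHeights

open PaperHeights in
open scoped ENNReal in
theorem statement18_general (n k : ℕ) (f : Fin k → RatMap n)
    (r : ℝ≥0∞)
    (δ : ℝ) (hδ : δ = (1 / (1 + (1 / r).toReal)) * ∑ l, (1 / ((f l).d : ℝ)))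
    (hδ1 : δ < 1)
    (C : ℝ)
    (hC : ∀ Q : Fin n → Qbar,
      (∑ l, (1 / ((f l).d : ℝ)) * affHeight ((f l).affineMap Q))
        > (1 + (1 / r).toReal) * affHeight Q - C) :
    ∀ P : Fin n → Qbar, (monoidOrbit f P).Finite → affHeight P ≤ C / (1 - δ) := fun P hfin =>
  le_div_of_height_inequality_of_finite hfin (fun l _ hQ => affineMap_mem_monoidOrbit hQ l)
    (fun Q _ => affHeight_nonneg Q) (fun _ => by positivity) ENNReal.toReal_nonneg hδ hδ1 hC
    ⟨[], rfl⟩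

open PaperHeights in
open scoped ENNReal in
/-- Let `S = {f₁,…,f_k}` be a jointly regular family of affine morphisms
with `r = max_l r(f_l)`, let `Φ` be the monoid generated by `S` under composition, and set
`δ_S = (1/(1+1/r))·∑ 1/deg f_l`.  If `δ_S < 1`, then the set `Pre(Φ)` of points with finite
`Φ`-orbit is a set of bounded height: explicitly `h(P) ≤ C/(1−δ_S)` for all `P ∈ Pre(Φ)`,
where `C` is the constant from the height inequality for `S`. -/
theorem statement18 (n k : ℕ) (f : Fin k → RatMap n)
    (haff : ∀ l, (f l).IsAffineMorphismExtension)
    (hjr : JointlyRegular f)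
    (r : ℝ≥0∞) (hr : r = ⨆ l, (f l).Dratio)
    (δ : ℝ) (hδ : δ = (1 / (1 + (1 / r).toReal)) * ∑ l, (1 / ((f l).d : ℝ)))
    (hδ1 : δ < 1)
    (C : ℝ)
    (hC : ∀ Q : Fin n → Qbar,
      (∑ l, (1 / ((f l).d : ℝ)) * affHeight ((f l).affineMap Q))
        > (1 + (1 / r).toReal) * affHeight Q - C) :
    ∀ P : Fin n → Qbar, (monoidOrbit f P).Finite → affHeight P ≤ C / (1 - δ) :=
  statement18_general n k f r δ hδ hδ1 C hC
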